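/- Let s ≥ 2, n = 3s, k = 2s−1, and let A⁰ be a central generic arrangement of 3s hyperplanes in ℂ^{2s−1}. Let T = {L₁,L₂,L₃} consist of subsets of {1,…,3s} with |Lᵢ| = 2s, |Lᵢ ∩ Lⱼ| = s for i ≠ j, and L₁ ∪ L₂ ∪ L₃ = {1,…,3s}. Set H_{i,j} = ⋂_{p ∈ Lᵢ∩Lⱼ} ker f_p. Then dim(H_{1,2} + H_{1,3} + H_{2,3}) = 2s−2 if and only if D_{L₁} ∩ D_{L₂} ⊆ D_{L₃}. -/
import Mathlib


noncomputable section

/-- A central generic arrangement of `n` hyperplanes in `ℂᵏ`. -/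
def CentralGeneric {n k : ℕ} (f : Fin n → ((Fin k → ℂ) →ₗ[ℂ] ℂ)) : Prop :=
  ∀ S : Finset (Fin n), S.card = k → LinearIndependent ℂ (fun i : S => f (i : Fin n))

/-- `D f S` : translations `t` for which the hyperplanes indexed by `S` have a
common point. -/
def D {n k : ℕ} (f : Fin n → ((Fin k → ℂ) →ₗ[ℂ] ℂ)) (S : Finset (Fin n)) :
    Set (Fin n → ℂ) :=
  {t | ∃ x : Fin k → ℂ, ∀ i ∈ S, f i x = t i}

/-- `H_{i,j} = ⋂_{p ∈ Lᵢ ∩ Lⱼ} ker f_p`. -/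
def Hij {n k : ℕ} (f : Fin n → ((Fin k → ℂ) →ₗ[ℂ] ℂ)) {r : ℕ}
    (L : Fin r → Finset (Fin n)) (i j : Fin r) : Submodule ℂ (Fin k → ℂ) :=
  ⨅ p ∈ L i ∩ L j, LinearMap.ker (f p)

lemma indep_subset {n k : ℕ} {f : Fin n → ((Fin k → ℂ) →ₗ[ℂ] ℂ)} (hf : CentralGeneric f)
    (hk : k ≤ n) {S : Finset (Fin n)} (hS : S.card ≤ k) :
    LinearIndependent ℂ (fun i : S => f (i : Fin n)) := by
  obtain ⟨T, hST, hT⟩ := Finset.exists_superset_card_eq hS (by simpa using hk)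
  have h := hf T hT
  have : (fun i : S => f (i : Fin n)) =
      (fun i : T => f (i : Fin n)) ∘ (fun i : S => (⟨i.1, hST i.2⟩ : T)) := rfl
  rw [this]
  exact h.comp _ (fun a b hab => by
    apply Subtype.ext
    simpa using congrArg Subtype.val hab)

lemma finrank_iInf_ker {n k : ℕ} {f : Fin n → ((Fin k → ℂ) →ₗ[ℂ] ℂ)} (hf : CentralGeneric f)
    (hk : k ≤ n) {S : Finset (Fin n)} (hS : S.card ≤ k) :
    Module.finrank ℂ (⨅ p ∈ S, LinearMap.ker (f p) : Submodule ℂ (Fin k → ℂ)) = k - S.card := by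
  have hind := indep_subset hf hk hS
  have heq : (⨅ p ∈ S, LinearMap.ker (f p) : Submodule ℂ (Fin k → ℂ)) =
      (Submodule.span ℂ (Set.range (fun i : S => f (i : Fin n)))).dualCoannihilator := by
    apply SetLike.coe_injective
    rw [Submodule.coe_dualCoannihilator_span]
    ext x
    simp [Submodule.mem_iInf, LinearMap.mem_ker]
  rw [heq]
  have h1 := Subspace.finrank_add_finrank_dualCoannihilator_eq
    (Submodule.span ℂ (Set.range (fun i : S => f (i : Fin n))))
  have h2 : Module.finrank ℂ
      (Submodule.span ℂ (Set.range (fun i : S => f (i : Fin n)))) = S.card := by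
    rw [finrank_span_eq_card hind, Fintype.card_coe]
  rw [h2] at h1
  simp only [Module.finrank_pi, Fintype.card_fin] at h1
  omega

lemma eq_zero_of_forall {n k : ℕ} {f : Fin n → ((Fin k → ℂ) →ₗ[ℂ] ℂ)} (hf : CentralGeneric f)
    {T : Finset (Fin n)} (hT : k ≤ T.card) {x : Fin k → ℂ}
    (hx : ∀ p ∈ T, f p x = 0) : x = 0 := by
  obtain ⟨S, hST, hS⟩ := Finset.exists_subset_card_eq hT
  have hind := hf S hS
  have hspan : Submodule.span ℂ (Set.range (fun i : S => f (i : Fin n))) = ⊤ := by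
    apply hind.span_eq_top_of_card_eq_finrank'
    rw [Fintype.card_coe, hS]
    simp [Module.finrank_linearMap]
  rw [← Module.forall_dual_apply_eq_zero_iff ℂ x]
  intro φ
  have hφ : φ ∈ Submodule.span ℂ (Set.range (fun i : S => f (i : Fin n))) := by
    rw [hspan]; trivial
  induction hφ using Submodule.span_induction with
  | mem g hg => obtain ⟨i, rfl⟩ := hg; exact hx i (hST i.2)
  | zero => simp
  | add a b _ _ ha hb => simp [ha, hb]
  | smul c a _ ha => simp [ha]

/-- Theorem: for `s ≥ 2`, a central generic arrangement of `3s` hyperplanes in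
`ℂ^{2s-1}` and `T = {L₁,L₂,L₃}` with `|Lᵢ| = 2s`, `|Lᵢ ∩ Lⱼ| = s` (`i ≠ j`) and
`L₁ ∪ L₂ ∪ L₃ = [3s]`, one has `dim(H_{1,2} + H_{1,3} + H_{2,3}) = 2s - 2` iff
`D_{L₁} ∩ D_{L₂} ⊆ D_{L₃}`. -/
theorem dependent_iff_three_dependent {s : ℕ} (hs : 2 ≤ s)
    (f : Fin (3 * s) → ((Fin (2 * s - 1) → ℂ) →ₗ[ℂ] ℂ)) (hf : CentralGeneric f)
    (L : Fin 3 → Finset (Fin (3 * s))) (hcard : ∀ i, (L i).card = 2 * s)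
    (hint : ∀ i j, i ≠ j → (L i ∩ L j).card = s)
    (hunion : L 0 ∪ L 1 ∪ L 2 = Finset.univ) :
    Module.finrank ℂ (Hij f L 0 1 ⊔ Hij f L 0 2 ⊔ Hij f L 1 2 :
        Submodule ℂ (Fin (2 * s - 1) → ℂ)) = 2 * s - 2 ↔
      D f (L 0) ∩ D f (L 1) ⊆ D f (L 2) := by
  have hk : 2 * s - 1 ≤ 3 * s := by omega
  -- L 0 ∪ L 1 = univ
  have h01 : L 0 ∪ L 1 = Finset.univ := by
    apply Finset.eq_univ_of_card
    have := Finset.card_union_add_card_inter (L 0) (L 1)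
    rw [hcard 0, hcard 1, hint 0 1 (by decide)] at this
    simp only [Fintype.card_fin]
    omega
  -- the triple intersection is empty
  have htriple : ∀ p, p ∈ L 0 → p ∈ L 1 → p ∈ L 2 → False := by
    have hLL : (L 0 ∩ L 2) ∪ (L 1 ∩ L 2) = L 2 := by
      rw [← Finset.union_inter_distrib_right, h01, Finset.univ_inter]
    have hI := Finset.card_union_add_card_inter (L 0 ∩ L 2) (L 1 ∩ L 2)
    rw [hLL, hcard 2, hint 0 2 (by decide), hint 1 2 (by decide)] at hI
    have hzero : ((L 0 ∩ L 2) ∩ (L 1 ∩ L 2)).card = 0 := by omega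
    intro p h0 h1 h2
    have : p ∈ (L 0 ∩ L 2) ∩ (L 1 ∩ L 2) := by simp [h0, h1, h2]
    rw [Finset.card_eq_zero] at hzero
    simp [hzero] at this
  have hL2 : ∀ p, p ∈ L 2 ↔ (p ∈ L 0 ∩ L 2 ∨ p ∈ L 1 ∩ L 2) := by
    intro p
    constructor
    · intro hp
      have : p ∈ L 0 ∪ L 1 := by rw [h01]; exact Finset.mem_univ p
      rcases Finset.mem_union.1 this with h | h
      · exact Or.inl (Finset.mem_inter.2 ⟨h, hp⟩)
      · exact Or.inr (Finset.mem_inter.2 ⟨h, hp⟩)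
    · rintro (h | h) <;> exact (Finset.mem_inter.1 h).2
  -- membership in Hij
  have hmem : ∀ (i j : Fin 3) (x : Fin (2 * s - 1) → ℂ),
      x ∈ Hij f L i j ↔ ∀ p ∈ L i ∩ L j, f p x = 0 := by
    intro i j x
    simp [Hij, Submodule.mem_iInf, LinearMap.mem_ker]
  -- finranks of the Hij
  have hr : ∀ (i j : Fin 3), i ≠ j → Module.finrank ℂ (Hij f L i j) = s - 1 := by
    intro i j hij
    have := finrank_iInf_ker hf hk (S := L i ∩ L j) (by rw [hint i j hij]; omega)
    rw [Hij, this, hint i j hij]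
    omega
  -- H02 ⊓ H12 = ⊥
  have hbot : Hij f L 0 2 ⊓ Hij f L 1 2 = ⊥ := by
    rw [Submodule.eq_bot_iff]
    rintro x ⟨hx0, hx1⟩
    apply eq_zero_of_forall hf (T := L 2) (by rw [hcard 2]; omega)
    intro p hp
    rcases (hL2 p).1 hp with h | h
    · exact (hmem 0 2 x).1 hx0 p h
    · exact (hmem 1 2 x).1 hx1 p h
  -- finrank of W := H02 ⊔ H12
  have hrW : Module.finrank ℂ (Hij f L 0 2 ⊔ Hij f L 1 2 :
      Submodule ℂ (Fin (2 * s - 1) → ℂ)) = 2 * s - 2 := by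
    have := Submodule.finrank_sup_add_finrank_inf_eq (Hij f L 0 2) (Hij f L 1 2)
    rw [hbot, hr 0 2 (by decide), hr 1 2 (by decide)] at this
    simp only [finrank_bot] at this
    omega
  rw [sup_assoc]
  -- first equivalence : finrank = 2s-2 ↔ H01 ≤ W
  have step1 : Module.finrank ℂ (Hij f L 0 1 ⊔ (Hij f L 0 2 ⊔ Hij f L 1 2) :
      Submodule ℂ (Fin (2 * s - 1) → ℂ))
      = 2 * s - 2 ↔ Hij f L 0 1 ≤ Hij f L 0 2 ⊔ Hij f L 1 2 := by
    constructor
    · intro h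
      have hle : (Hij f L 0 2 ⊔ Hij f L 1 2) ≤ Hij f L 0 1 ⊔ (Hij f L 0 2 ⊔ Hij f L 1 2) := le_sup_right
      have heq : (Hij f L 0 2 ⊔ Hij f L 1 2 : Submodule ℂ (Fin (2 * s - 1) → ℂ))
          = Hij f L 0 1 ⊔ (Hij f L 0 2 ⊔ Hij f L 1 2) :=
        Submodule.eq_of_le_of_finrank_le hle (by rw [h, hrW])
      rw [heq]
      exact le_sup_left
    · intro h
      rw [sup_eq_right.2 h, hrW]
  rw [step1]
  -- second equivalence : H01 ≤ W ↔ D ∩ D ⊆ D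
  constructor
  · -- H01 ≤ W → inclusion of discriminantal sets
    intro h t ⟨⟨x0, hx0⟩, ⟨x1, hx1⟩⟩
    have hv : x0 - x1 ∈ Hij f L 0 1 := by
      rw [hmem]
      intro p hp
      rw [Finset.mem_inter] at hp
      rw [map_sub, hx0 p hp.1, hx1 p hp.2, sub_self]
    obtain ⟨h02, hh02, h12, hh12, hsum⟩ := Submodule.mem_sup.1 (h hv)
    refine ⟨x0 - h02, ?_⟩
    intro p hp
    rcases (hL2 p).1 hp with hp' | hp'
    · rw [map_sub, hx0 p (Finset.mem_inter.1 hp').1, (hmem 0 2 h02).1 hh02 p hp', sub_zero]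
    · have : x0 - h02 = x1 + h12 := by
        have : x0 - x1 = h02 + h12 := hsum.symm
        linear_combination (norm := module) this
      rw [this, map_add, hx1 p (Finset.mem_inter.1 hp').1, (hmem 1 2 h12).1 hh12 p hp', add_zero]
  · -- inclusion of discriminantal sets → H01 ≤ W
    intro h v hv
    set t : Fin (3 * s) → ℂ := fun p => if p ∈ L 0 then f p v else 0 with ht
    have ht0 : t ∈ D f (L 0) := ⟨v, fun p hp => by simp [ht, hp]⟩
    have ht1 : t ∈ D f (L 1) := by
      refine ⟨0, fun p hp => ?_⟩
      by_cases hp0 : p ∈ L 0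
      · have : f p v = 0 := (hmem 0 1 v).1 hv p (Finset.mem_inter.2 ⟨hp0, hp⟩)
        simp [ht, hp0, this]
      · simp [ht, hp0]
    obtain ⟨x2, hx2⟩ := h ⟨ht0, ht1⟩
    have hx2mem : x2 ∈ Hij f L 1 2 := by
      rw [hmem]
      intro p hp
      rw [Finset.mem_inter] at hp
      have hp0 : p ∉ L 0 := fun h0 => htriple p h0 hp.1 hp.2
      have := hx2 p hp.2
      simpa [ht, hp0] using this
    have hvx2 : v - x2 ∈ Hij f L 0 2 := by
      rw [hmem]
      intro p hp
      rw [Finset.mem_inter] at hp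
      have := hx2 p hp.2
      rw [ht] at this
      simp only [if_pos hp.1] at this
      rw [map_sub, this, sub_self]
    have : v = (v - x2) + x2 := by abel
    rw [this]
    exact Submodule.add_mem_sup hvx2 hx2mem
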